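/- arXiv:2305.15394 — 5 statements merged into one kernel-verified Lean document; each statement's English description precedes it below -/
import Mathlib

section
/- If a randomized algorithm M adds Laplace noise with scale Δf/ε independently to each coordinate of a function f: D → ℝ^k, where Δf is the ℓ1-sensitivity of f over neighboring datasets, then M satisfies ε-differential privacy: for all neighboring datasets D, D' and all measurable sets S, Pr[M(D) ∈ S] ≤ e^ε · Pr[M(D') ∈ S]. -/
/-!
The Laplace density with scale `b` centred at `m` is at most `exp (|m - m'| / b)` times the one
centred at `m'`, by the triangle inequality `|x - m'| ≤ |x - m| + |m - m'|`. Hence each noise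
coordinate for `D` is dominated by `exp (|f D i - f D' i| / b)` times the one for `D'`. These
bounds multiply through the product measure, and with `b = Δ / ε` the total factor
`exp (∑ i, |f D i - f D' i| / b)` is at most `exp ε` by the sensitivity bound.
-/

open MeasureTheory

/-- Two histogram-datasets over a finite universe are neighboring if their ℓ1 distance is at
most 1 (they differ in one element). -/
def Neighbor {X : Type*} [Fintype X] (D D' : X → ℕ) : Prop :=
  ∑ x, |(D x : ℤ) - (D' x : ℤ)| ≤ 1

open scoped NNReal

namespace MeasureTheory.Measure

variable {ι : Type*} {α : ι → Type*} [Fintype ι] [∀ i, MeasurableSpace (α i)]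

theorem pi_mono {μ ν : ∀ i, Measure (α i)} (h : ∀ i, μ i ≤ ν i) :
    Measure.pi μ ≤ Measure.pi ν := by
  have hle : (OuterMeasure.pi fun i => (μ i).toOuterMeasure) ≤
      OuterMeasure.pi fun i => (ν i).toOuterMeasure :=
    OuterMeasure.le_pi.2 fun s _ =>
      (OuterMeasure.pi_pi_le _ s).trans (Finset.prod_le_prod' fun i _ => h i (s i))
  refine Measure.le_iff.2 fun s hs => ?_
  rw [Measure.pi_def, Measure.pi_def, toMeasure_apply _ _ hs, toMeasure_apply _ _ hs]
  exact hle s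

theorem pi_smul (μ : ∀ i, Measure (α i)) [∀ i, SigmaFinite (μ i)] (c : ι → ℝ≥0) :
    Measure.pi (fun i => c i • μ i) = (∏ i, c i) • Measure.pi μ :=
  pi_eq fun s _ => by
    simp only [smul_apply, pi_pi, ENNReal.smul_def, smul_eq_mul, ENNReal.ofNNReal_finsetProd,
      Finset.prod_mul_distrib]

theorem pi_le_smul_pi {μ ν : ∀ i, Measure (α i)} [∀ i, SigmaFinite (ν i)] {c : ι → ℝ≥0}
    (h : ∀ i, μ i ≤ c i • ν i) : Measure.pi μ ≤ (∏ i, c i) • Measure.pi ν :=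
  pi_smul ν c ▸ pi_mono h

end MeasureTheory.Measure

open Real

theorem Real.exp_neg_abs_sub_div_le (x m m' : ℝ) {b : ℝ} (hb : 0 ≤ b) :
    exp (-|x - m| / b) ≤ exp (|m - m'| / b) * exp (-|x - m'| / b) := by
  rw [← exp_add, exp_le_exp, ← add_div]
  gcongr
  linarith [abs_sub_le x m m', abs_sub_comm m m']

noncomputable def laplaceMeasure (m b : ℝ) : Measure ℝ :=
  volume.withDensity fun x => ENNReal.ofReal (exp (-|x - m| / b) / (2 * b))

instance (m b : ℝ) : SigmaFinite (laplaceMeasure m b) := by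
  unfold laplaceMeasure; infer_instance

theorem laplaceMeasure_le_smul (m m' : ℝ) {b : ℝ} (hb : 0 ≤ b) :
    laplaceMeasure m b ≤ (exp (|m - m'| / b)).toNNReal • laplaceMeasure m' b := by
  rw [laplaceMeasure, laplaceMeasure, ENNReal.smul_def, ← withDensity_smul _ (by fun_prop)]
  refine withDensity_mono (Filter.Eventually.of_forall fun x => ?_)
  change ENNReal.ofReal _ ≤ ENNReal.ofReal _ * ENNReal.ofReal _
  rw [← ENNReal.ofReal_mul (exp_pos _).le, mul_div_assoc']
  gcongr
  exact exp_neg_abs_sub_div_le x m m' hb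

theorem pi_laplaceMeasure_le_smul {ι : Type*} [Fintype ι] (a a' : ι → ℝ) {b : ℝ} (hb : 0 ≤ b) :
    Measure.pi (fun i => laplaceMeasure (a i) b) ≤
      (exp ((∑ i, |a i - a' i|) / b)).toNNReal • Measure.pi (fun i => laplaceMeasure (a' i) b) := by
  rw [Finset.sum_div, exp_sum, Real.toNNReal_prod_of_nonneg fun i _ => (exp_pos _).le]
  exact Measure.pi_le_smul_pi fun i => laplaceMeasure_le_smul (a i) (a' i) hb

theorem laplace_mechanism_dp_general {X : Type*} [Fintype X] (k : ℕ)
    (f : (X → ℕ) → (Fin k → ℝ)) (ε Δ : ℝ) (hε : 0 < ε)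
    (hsens : ∀ D D', Neighbor D D' → ∑ i, |f D i - f D' i| ≤ Δ)
    (M : (X → ℕ) → Measure (Fin k → ℝ))
    (hM : ∀ D, M D = Measure.pi fun i =>
      volume.withDensity fun x =>
        ENNReal.ofReal ((ε / (2 * Δ)) * Real.exp (-(|x - f D i| * ε / Δ)))) :
    ∀ D D', Neighbor D D' → ∀ S : Set (Fin k → ℝ), MeasurableSet S →
      M D S ≤ ENNReal.ofReal (Real.exp ε) * M D' S := by
  have hM_laplace : ∀ D, M D = Measure.pi fun i => laplaceMeasure (f D i) (Δ / ε) := by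
    intro D
    simp only [hM, laplaceMeasure]
    congr! 5 with i x
    field_simp
  intro D D' hN S _
  have hsensD := hsens D D' hN
  have hΔ : 0 ≤ Δ := (Finset.sum_nonneg fun i _ => abs_nonneg _).trans hsensD
  have hb : 0 ≤ Δ / ε := div_nonneg hΔ hε.le
  have hfactor : (∑ i, |f D i - f D' i|) / (Δ / ε) ≤ ε :=
    div_le_of_le_mul₀ hb hε.le (by rwa [mul_div_cancel₀ _ hε.ne'])
  calc M D S
      ≤ ((exp ((∑ i, |f D i - f D' i|) / (Δ / ε))).toNNReal • M D') S := by
        rw [hM_laplace, hM_laplace]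
        exact pi_laplaceMeasure_le_smul (f D) (f D') hb S
    _ ≤ ENNReal.ofReal (exp ε) * M D' S := by
        rw [Measure.smul_apply, ENNReal.smul_def, smul_eq_mul]
        gcongr
        exact ENNReal.ofReal_le_ofReal (exp_le_exp.2 hfactor)

/-- The Laplace mechanism: adding independent Laplace noise with scale `Δ/ε` to every
coordinate of a query `f` with ℓ1-sensitivity `Δ` satisfies `ε`-differential privacy. -/
theorem laplace_mechanism_dp {X : Type*} [Fintype X] (k : ℕ)
    (f : (X → ℕ) → (Fin k → ℝ)) (ε Δ : ℝ) (hε : 0 < ε) (hΔ : 0 < Δ)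
    (hsens : ∀ D D', Neighbor D D' → ∑ i, |f D i - f D' i| ≤ Δ)
    (M : (X → ℕ) → Measure (Fin k → ℝ))
    (hM : ∀ D, M D = Measure.pi fun i =>
      volume.withDensity fun x =>
        ENNReal.ofReal ((ε / (2 * Δ)) * Real.exp (-(|x - f D i| * ε / Δ)))) :
    ∀ D D', Neighbor D D' → ∀ S : Set (Fin k → ℝ), MeasurableSet S →
      M D S ≤ ENNReal.ofReal (Real.exp ε) * M D' S :=
  laplace_mechanism_dp_general k f ε Δ hε hsens M hM
end

section
/- The two-sided geometric mechanism, which to an integer-valued query f of sensitivity 1 adds integer noise δ drawn with probability Pr[y = δ] = ((1−α)/(1+α))·α^{|δ|} for parameter α = e^{−ε}, satisfies ε-differential privacy. -/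
section GeometricWeight

variable {K : Type*} [Field K] [LinearOrder K] [IsStrictOrderedRing K] {α : K}

theorem pow_natAbs_le_inv_mul_pow_natAbs (h0 : 0 < α) (h1 : α ≤ 1) {a b : ℤ}
    (hab : |a - b| ≤ 1) : α ^ a.natAbs ≤ α⁻¹ * α ^ b.natAbs := by
  have hb : b.natAbs ≤ a.natAbs + 1 := by
    rw [abs_le] at hab
    omega
  calc α ^ a.natAbs = α⁻¹ * α ^ (a.natAbs + 1) := by rw [pow_succ', inv_mul_cancel_left₀ h0.ne']
    _ ≤ α⁻¹ * α ^ b.natAbs :=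
      mul_le_mul_of_nonneg_left (pow_le_pow_of_le_one h0.le h1 hb) (inv_nonneg.2 h0.le)

theorem twoSidedGeometric_le_inv_mul_of_abs_sub_le_one (h0 : 0 < α) (h1 : α ≤ 1) {a b : ℤ}
    (hab : |a - b| ≤ 1) :
    (1 - α) / (1 + α) * α ^ a.natAbs ≤ α⁻¹ * ((1 - α) / (1 + α) * α ^ b.natAbs) := by
  have hnorm : 0 ≤ (1 - α) / (1 + α) := div_nonneg (by linarith) (by linarith)
  calc (1 - α) / (1 + α) * α ^ a.natAbs ≤ (1 - α) / (1 + α) * (α⁻¹ * α ^ b.natAbs) :=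
        mul_le_mul_of_nonneg_left (pow_natAbs_le_inv_mul_pow_natAbs h0 h1 hab) hnorm
    _ = α⁻¹ * ((1 - α) / (1 + α) * α ^ b.natAbs) := mul_left_comm _ _ _

end GeometricWeight

/-- The two-sided geometric mechanism: adding integer noise `δ` with probability
`((1-α)/(1+α))·α^{|δ|}` for `α = e^{-ε}` to an integer-valued query of sensitivity 1
satisfies `ε`-differential privacy. -/
theorem geometric_mechanism_dp {X : Type*} [Fintype X]
    (f : (X → ℕ) → ℤ) (ε : ℝ) (hε : 0 < ε)
    (hsens : ∀ D D', Neighbor D D' → |f D - f D'| ≤ 1)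
    (M : (X → ℕ) → PMF ℤ)
    (hM : ∀ D t, M D t = ENNReal.ofReal
      (((1 - Real.exp (-ε)) / (1 + Real.exp (-ε))) *
        Real.exp (-ε) ^ (t - f D).natAbs)) :
    ∀ D D', Neighbor D D' → ∀ t : ℤ,
      M D t ≤ ENNReal.ofReal (Real.exp ε) * M D' t := by
  intro D D' hnb t
  have hshift : |(t - f D) - (t - f D')| ≤ 1 := by
    rw [sub_sub_sub_cancel_left, abs_sub_comm]
    exact hsens D D' hnb
  have hα : Real.exp (-ε) ≤ 1 := Real.exp_le_one_iff.2 (neg_nonpos.2 hε.le)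
  rw [hM, hM, ← ENNReal.ofReal_mul (Real.exp_pos ε).le]
  refine ENNReal.ofReal_le_ofReal ?_
  simpa only [Real.exp_neg, inv_inv] using
    twoSidedGeometric_le_inv_mul_of_abs_sub_le_one (Real.exp_pos (-ε)) hα hshift
end

section
/- The exponential mechanism, which outputs element t ∈ R with probability proportional to exp(ε·u(D,t)/(2Δu))·μ(t), where Δu is the sensitivity of the utility function u, satisfies ε-differential privacy. -/
/-!
Changing the dataset to a neighbouring one moves every exponent `ε·u(D,r)/(2Δu)` by at most
`ε/2`, so every unnormalised weight, and hence also the normalising sum, changes by a factor of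
at most `exp(ε/2)`. The numerator and the denominator together give the factor `exp ε`.
-/

theorem Neighbor.symm {X : Type*} [Fintype X] {D D' : X → ℕ} (h : Neighbor D D') :
    Neighbor D' D := by
  simpa only [Neighbor, abs_sub_comm] using h

theorem mul_div_two_mul_le_half_add {ε Δ a b : ℝ} (hε : 0 ≤ ε) (h : |a - b| ≤ Δ) :
    ε * a / (2 * Δ) ≤ ε / 2 + ε * b / (2 * Δ) := by
  have hΔ : 0 ≤ 2 * Δ := by linarith [abs_nonneg (a - b)]
  have hdiff : ε * (a - b) / (2 * Δ) ≤ ε / 2 :=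
    div_le_of_le_mul₀ hΔ (by positivity) <| by
      linarith [mul_le_mul_of_nonneg_left ((le_abs_self _).trans h) hε]
  rw [mul_sub, sub_div] at hdiff
  linarith

theorem exp_mul_div_two_mul_le {ε Δ a b : ℝ} (hε : 0 ≤ ε) (h : |a - b| ≤ Δ) :
    Real.exp (ε * a / (2 * Δ)) ≤ Real.exp (ε / 2) * Real.exp (ε * b / (2 * Δ)) := by
  rw [← Real.exp_add]
  exact Real.exp_le_exp.mpr (mul_div_two_mul_le_half_add hε h)

theorem div_sum_le_mul_mul_div_sum {ι : Type*} [Fintype ι] {w w' : ι → ℝ} {c : ℝ}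
    (hw : ∀ i, 0 < w i) (hw' : ∀ i, 0 < w' i)
    (h : ∀ i, w i ≤ c * w' i) (h' : ∀ i, w' i ≤ c * w i) (t : ι) :
    w t / ∑ i, w i ≤ c * c * (w' t / ∑ i, w' i) := by
  have hne : (Finset.univ : Finset ι).Nonempty := ⟨t, Finset.mem_univ t⟩
  have hS : 0 < ∑ i, w i := Finset.sum_pos (fun i _ => hw i) hne
  have hS' : 0 < ∑ i, w' i := Finset.sum_pos (fun i _ => hw' i) hne
  have hc : 0 < c := pos_of_mul_pos_left ((hw t).trans_le (h t)) (hw' t).le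
  have hsum : ∑ i, w' i ≤ c * ∑ i, w i := by
    rw [Finset.mul_sum]
    exact Finset.sum_le_sum fun i _ => h' i
  rw [div_le_iff₀ hS]
  calc w t ≤ c * w' t := h t
    _ = c * (w' t / ∑ i, w' i) * ∑ i, w' i := by field_simp
    _ ≤ c * (w' t / ∑ i, w' i) * (c * ∑ i, w i) := by
      gcongr
      exact mul_nonneg hc.le (div_pos (hw' t) hS').le
    _ = c * c * (w' t / ∑ i, w' i) * ∑ i, w i := by ring

theorem exponential_mechanism_dp_general {X R : Type*} [Fintype X] [Fintype R]
    (u : (X → ℕ) → R → ℝ) (μ : R → ℝ) (hμ : ∀ t, 0 < μ t)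
    (ε Δu : ℝ) (hε : 0 < ε)
    (hsens : ∀ r D D', Neighbor D D' → |u D r - u D' r| ≤ Δu)
    (P : (X → ℕ) → R → ℝ)
    (hP : ∀ D t, P D t = Real.exp (ε * u D t / (2 * Δu)) * μ t /
      ∑ r, Real.exp (ε * u D r / (2 * Δu)) * μ r) :
    ∀ D D', Neighbor D D' → ∀ t, P D t ≤ Real.exp ε * P D' t := by
  intro D D' hN t
  have hweight_pos : ∀ E r, 0 < Real.exp (ε * u E r / (2 * Δu)) * μ r :=
    fun _ r => mul_pos (Real.exp_pos _) (hμ r)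
  have hweight_le : ∀ E E', Neighbor E E' → ∀ r,
      Real.exp (ε * u E r / (2 * Δu)) * μ r ≤
        Real.exp (ε / 2) * (Real.exp (ε * u E' r / (2 * Δu)) * μ r) := fun E E' h r => by
    rw [← mul_assoc]
    exact mul_le_mul_of_nonneg_right (exp_mul_div_two_mul_le hε.le (hsens r E E' h)) (hμ r).le
  calc P D t ≤ Real.exp (ε / 2) * Real.exp (ε / 2) * P D' t := by
        rw [hP, hP]
        exact div_sum_le_mul_mul_div_sum (hweight_pos D) (hweight_pos D')
          (hweight_le D D' hN) (hweight_le D' D hN.symm) t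
    _ = Real.exp ε * P D' t := by rw [← Real.exp_add, add_halves]

/-- The exponential mechanism, which outputs `t ∈ R` with probability proportional to
`exp(ε·u(D,t)/(2Δu))·μ(t)` where `Δu` is the sensitivity of the utility `u`,
satisfies `ε`-differential privacy. -/
theorem exponential_mechanism_dp {X R : Type*} [Fintype X] [Fintype R] [Nonempty R]
    (u : (X → ℕ) → R → ℝ) (μ : R → ℝ) (hμ : ∀ t, 0 < μ t)
    (ε Δu : ℝ) (hε : 0 < ε) (hΔ : 0 < Δu)
    (hsens : ∀ r D D', Neighbor D D' → |u D r - u D' r| ≤ Δu)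
    (P : (X → ℕ) → R → ℝ)
    (hP : ∀ D t, P D t = Real.exp (ε * u D t / (2 * Δu)) * μ t /
      ∑ r, Real.exp (ε * u D r / (2 * Δu)) * μ r) :
    ∀ D D', Neighbor D D' → ∀ t, P D t ≤ Real.exp ε * P D' t :=
  exponential_mechanism_dp_general u μ hμ ε Δu hε hsens P hP
end

section
/- Backdoor attack-success-rate bound: if M is an ε-differentially private learner and ASR is a [0,1]-valued measurable function of the model (attack success rate), then for any dataset D̃ with at most x poisoned samples relative to D, E[ASR(M(D̃))] ≤ 1 − e^{−xε} · E[1 − ASR(M(D))]. -/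
open MeasureTheory

/-! Chaining the privacy inequality along `x` neighbouring steps gives `M D ≤ e^{xε} • M D̃` as
measures, so the expected value of the nonnegative cost `1 - ASR` grows by at most `e^{xε}` from
`M D̃` to `M D`; since `M D̃` is a probability measure, that expected value is `1 - E[ASR]`. -/

/-- `ε`-differential privacy of a mechanism `M` with respect to a neighboring relation. -/
def IsDP {Dst Ω : Type*} [MeasurableSpace Ω] (Neighbor : Dst → Dst → Prop) (ε : ℝ)
    (M : Dst → Measure Ω) : Prop :=
  ∀ d d', Neighbor d d' → ∀ S : Set Ω, MeasurableSet S →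
    M d S ≤ ENNReal.ofReal (Real.exp ε) * M d' S

/-- Two datasets differ in at most `x` elements. -/
def DistLE {Dst : Type*} (Neighbor : Dst → Dst → Prop) (x : ℕ) (d d' : Dst) : Prop :=
  ∃ c : ℕ → Dst, c 0 = d ∧ c x = d' ∧ ∀ i < x, Neighbor (c i) (c (i + 1))

namespace IsDP

variable {Dst Ω : Type*} [MeasurableSpace Ω] {Neighbor : Dst → Dst → Prop} {ε : ℝ}
  {M : Dst → Measure Ω}

lemma le_smul (hM : IsDP Neighbor ε M) {d d' : Dst} (h : Neighbor d d') :
    M d ≤ ENNReal.ofReal (Real.exp ε) • M d' :=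
  Measure.le_iff.2 fun S hS => hM d d' h S hS

/-- Group privacy. -/
lemma distLE (hM : IsDP Neighbor ε M) (n : ℕ) : IsDP (DistLE Neighbor n) (n * ε) M := by
  induction n with
  | zero =>
    rintro d d' ⟨c, rfl, rfl, -⟩ S -
    simp
  | succ n ih =>
    rintro d d' ⟨c, rfl, rfl, hc⟩ S hS
    have hfirst := ih (c 0) (c n) ⟨c, rfl, rfl, fun i hi => hc i (by omega)⟩ S hS
    have hlast := hM (c n) (c (n + 1)) (hc n n.lt_succ_self) S hS
    calc M (c 0) S ≤ ENNReal.ofReal (Real.exp (n * ε)) * M (c n) S := hfirst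
      _ ≤ ENNReal.ofReal (Real.exp (n * ε)) *
          (ENNReal.ofReal (Real.exp ε) * M (c (n + 1)) S) := by gcongr
      _ = ENNReal.ofReal (Real.exp ((n + 1 : ℕ) * ε)) * M (c (n + 1)) S := by
        rw [← mul_assoc, ← ENNReal.ofReal_mul (Real.exp_nonneg _), ← Real.exp_add]
        push_cast
        ring_nf

lemma integral_le_exp_mul (hM : IsDP Neighbor ε M) {d d' : Dst} (h : Neighbor d d')
    {f : Ω → ℝ} (hf0 : 0 ≤ f) (hf : Integrable f (M d')) :
    ∫ ω, f ω ∂(M d) ≤ Real.exp ε * ∫ ω, f ω ∂(M d') :=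
  calc ∫ ω, f ω ∂(M d) ≤ ∫ ω, f ω ∂(ENNReal.ofReal (Real.exp ε) • M d') :=
        integral_mono_measure (hM.le_smul h) (Filter.Eventually.of_forall hf0)
          (hf.smul_measure ENNReal.ofReal_ne_top)
    _ = Real.exp ε * ∫ ω, f ω ∂(M d') := by
        rw [integral_smul_measure, ENNReal.toReal_ofReal (Real.exp_nonneg ε), smul_eq_mul]

end IsDP

theorem backdoor_asr_bound_general {Dst Ω : Type*} [MeasurableSpace Ω]
    (Neighbor : Dst → Dst → Prop)
    (ε : ℝ) (M : Dst → Measure Ω)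
    (hP : ∀ d, IsProbabilityMeasure (M d))
    (hM : IsDP Neighbor ε M)
    (ASR : Ω → ℝ) (hmeas : Measurable ASR)
    (hrange : ∀ ω, ASR ω ∈ Set.Icc (0 : ℝ) 1)
    (x : ℕ) (D Dtilde : Dst) (hd : DistLE Neighbor x D Dtilde) :
    ∫ ω, ASR ω ∂(M Dtilde) ≤ 1 - Real.exp (-(x * ε)) * ∫ ω, (1 - ASR ω) ∂(M D) := by
  have hASR : Integrable ASR (M Dtilde) :=
    .of_bound hmeas.aestronglyMeasurable 1 (.of_forall fun ω => by
      rw [Real.norm_of_nonneg (hrange ω).1]; exact (hrange ω).2)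
  have hcost := (hM.distLE x).integral_le_exp_mul hd (f := fun ω => 1 - ASR ω)
    (fun ω => sub_nonneg.2 (hrange ω).2) ((integrable_const 1).sub hASR)
  have hcomplement : ∫ ω, (1 - ASR ω) ∂(M Dtilde) = 1 - ∫ ω, ASR ω ∂(M Dtilde) := by
    rw [integral_sub (integrable_const 1) hASR, integral_const, probReal_univ, one_smul]
  calc ∫ ω, ASR ω ∂(M Dtilde) = 1 - ∫ ω, (1 - ASR ω) ∂(M Dtilde) := by linarith
    _ = 1 - Real.exp (-(x * ε)) * (Real.exp (x * ε) * ∫ ω, (1 - ASR ω) ∂(M Dtilde)) := by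
        rw [← mul_assoc, ← Real.exp_add, neg_add_cancel, Real.exp_zero, one_mul]
    _ ≤ 1 - Real.exp (-(x * ε)) * ∫ ω, (1 - ASR ω) ∂(M D) := by gcongr

/-- Backdoor attack-success-rate bound: if `M` is an `ε`-differentially private learner and
`ASR` is a `[0,1]`-valued measurable function of the model, then for any dataset `D̃` with
at most `x` poisoned samples relative to `D`,
`E[ASR(M(D̃))] ≤ 1 - e^{-xε}·E[1 - ASR(M(D))]`. -/
theorem backdoor_asr_bound {Dst Ω : Type*} [MeasurableSpace Ω]
    (Neighbor : Dst → Dst → Prop)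
    (hsymm : ∀ d d', Neighbor d d' → Neighbor d' d)
    (ε : ℝ) (M : Dst → Measure Ω)
    (hP : ∀ d, IsProbabilityMeasure (M d))
    (hM : IsDP Neighbor ε M)
    (ASR : Ω → ℝ) (hmeas : Measurable ASR)
    (hrange : ∀ ω, ASR ω ∈ Set.Icc (0 : ℝ) 1)
    (x : ℕ) (D Dtilde : Dst) (hd : DistLE Neighbor x D Dtilde) :
    ∫ ω, ASR ω ∂(M Dtilde) ≤ 1 - Real.exp (-(x * ε)) * ∫ ω, (1 - ASR ω) ∂(M D) :=
  backdoor_asr_bound_general Neighbor ε M hP hM ASR hmeas hrange x D Dtilde hd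
end

section
/- Optimality of the binary-class sorted partition (Coppersmith–Hodges–Hong–Monma): for binary classification over a set of categories, among all 2-partitions of the categories, some partition minimizing the weighted Gini impurity is obtained by sorting categories by their proportion of class-1 samples and splitting the sorted order at some threshold; i.e., there exists an optimal partition that is a prefix/suffix of the sorted order. -/
/-!
Let category `i` have size `w_i` and class-1 count `y_i`, and let `a_S`, `b_S` be their sums over
a set `S` of categories. The Gini impurity of `(S, Sᶜ)` is
`2 / N * (a_univ - (a_S ^ 2 / b_S + a_Sᶜ ^ 2 / b_Sᶜ))`, so one has to maximise the score
`a_S ^ 2 / b_S + a_Sᶜ ^ 2 / b_Sᶜ`. Since `a ^ 2 / b = max_t (2 t a - t ^ 2 b)`, attained at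
`t = a / b`, the score of `S` is `∑_{i ∈ S} ℓ_s i + ∑_{i ∉ S} ℓ_t i`, where
`ℓ_t i = 2 t y_i - t ^ 2 w_i` and `s`, `t` are the class-1 proportions of `S` and `Sᶜ`. This sum
can only grow when `S` is replaced by `T = {i | ℓ_t i ≤ ℓ_s i}`, and the score of `T` bounds it
from above again. For `s ≤ t`, membership in `T` says `y_i / w_i ≤ (s + t) / 2`, so `T` is an
initial segment of the sorted order; the case `t < s` reduces to it by exchanging `S` and `Sᶜ`.
-/
/-- Weighted Gini impurity of the 2-partition `(L, Lᶜ)` of categories, where category `c`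
has `n0 c` class-0 samples and `n1 c` class-1 samples. -/
noncomputable def giniImpurity {C : Type*} [Fintype C] [DecidableEq C]
    (n0 n1 : C → ℕ) (L : Finset C) : ℝ :=
  let NL : ℝ := ∑ c ∈ L, ((n0 c : ℝ) + n1 c)
  let NR : ℝ := ∑ c ∈ Lᶜ, ((n0 c : ℝ) + n1 c)
  let N : ℝ := NL + NR
  let pL : ℝ := (∑ c ∈ L, (n1 c : ℝ)) / NL
  let pR : ℝ := (∑ c ∈ Lᶜ, (n1 c : ℝ)) / NR
  (NL / N) * (1 - pL ^ 2 - (1 - pL) ^ 2) + (NR / N) * (1 - pR ^ 2 - (1 - pR) ^ 2)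

open Finset

lemma two_mul_mul_sub_sq_mul_le_sq_div {a b : ℝ} (t : ℝ) (hb : 0 ≤ b) (hab : b = 0 → a = 0) :
    2 * t * a - t ^ 2 * b ≤ a ^ 2 / b := by
  rcases hb.eq_or_lt with rfl | hb
  · simp [hab rfl]
  · have key : a ^ 2 / b - (2 * t * a - t ^ 2 * b) = (a - t * b) ^ 2 / b := by
      field_simp
      ring
    linarith [div_nonneg (sq_nonneg (a - t * b)) hb.le]

lemma two_mul_div_mul_sub_sq_mul_eq_sq_div {a b : ℝ} (hab : b = 0 → a = 0) :
    2 * (a / b) * a - (a / b) ^ 2 * b = a ^ 2 / b := by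
  rcases eq_or_ne b 0 with rfl | hb
  · simp [hab rfl]
  · field_simp
    ring

lemma div_mul_one_sub_sq_sub_one_sub_sq {a b : ℝ} (N : ℝ) (hab : b = 0 → a = 0) :
    b / N * (1 - (a / b) ^ 2 - (1 - a / b) ^ 2) = 2 / N * (a - a ^ 2 / b) := by
  rcases eq_or_ne b 0 with rfl | hb
  · simp [hab rfl]
  · field_simp
    ring

lemma sum_add_sum_compl_le_sum_filter_add_sum_compl {ι : Type*} [Fintype ι] [DecidableEq ι]
    (f g : ι → ℝ) (S : Finset ι) :
    ∑ i ∈ S, f i + ∑ i ∈ Sᶜ, g i ≤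
      ∑ i ∈ univ.filter (fun i => g i ≤ f i), f i +
        ∑ i ∈ (univ.filter fun i => g i ≤ f i)ᶜ, g i := by
  set T := univ.filter fun i => g i ≤ f i
  have hT : ∑ i ∈ T, f i + ∑ i ∈ Tᶜ, g i = ∑ i, max (f i) (g i) := by
    rw [← sum_add_sum_compl T fun i => max (f i) (g i)]
    congr 1 <;> refine sum_congr rfl fun i hi => ?_
    · exact (max_eq_left (mem_filter.1 hi).2).symm
    · exact (max_eq_right (by simpa [T] using hi : f i < g i).le).symm
  rw [hT, ← sum_add_sum_compl S fun i => max (f i) (g i)]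
  gcongr with i _ i _
  · exact le_max_left _ _
  · exact le_max_right _ _

section TangentTerm

variable {ι : Type*} (w y : ι → ℝ)

def tangentTerm (t : ℝ) (i : ι) : ℝ :=
  2 * t * y i - t ^ 2 * w i

noncomputable def proportion (S : Finset ι) : ℝ :=
  (∑ i ∈ S, y i) / ∑ i ∈ S, w i

variable {w y}

lemma sum_tangentTerm (t : ℝ) (S : Finset ι) :
    ∑ i ∈ S, tangentTerm w y t i = 2 * t * ∑ i ∈ S, y i - t ^ 2 * ∑ i ∈ S, w i := by
  simp only [tangentTerm, sum_sub_distrib, mul_sum]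

lemma sum_eq_zero_of_sum_eq_zero (hy : ∀ i, 0 ≤ y i) (hyw : ∀ i, y i ≤ w i) (S : Finset ι)
    (h : ∑ i ∈ S, w i = 0) : ∑ i ∈ S, y i = 0 :=
  le_antisymm (h ▸ sum_le_sum fun i _ => hyw i) (sum_nonneg fun i _ => hy i)

lemma sum_tangentTerm_le (hy : ∀ i, 0 ≤ y i) (hyw : ∀ i, y i ≤ w i) (t : ℝ) (S : Finset ι) :
    ∑ i ∈ S, tangentTerm w y t i ≤ (∑ i ∈ S, y i) ^ 2 / ∑ i ∈ S, w i := by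
  rw [sum_tangentTerm]
  exact two_mul_mul_sub_sq_mul_le_sq_div t (sum_nonneg fun i _ => (hy i).trans (hyw i))
    (sum_eq_zero_of_sum_eq_zero hy hyw S)

lemma sum_tangentTerm_proportion (hy : ∀ i, 0 ≤ y i) (hyw : ∀ i, y i ≤ w i) (S : Finset ι) :
    ∑ i ∈ S, tangentTerm w y (proportion w y S) i = (∑ i ∈ S, y i) ^ 2 / ∑ i ∈ S, w i := by
  rw [sum_tangentTerm]
  exact two_mul_div_mul_sub_sq_mul_eq_sq_div (sum_eq_zero_of_sum_eq_zero hy hyw S)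

lemma tangentTerm_le_tangentTerm_iff {s t : ℝ} {i : ι} (hw : 0 < w i) :
    tangentTerm w y t i ≤ tangentTerm w y s i ↔ 0 ≤ (s - t) * (2 * (y i / w i) - (s + t)) := by
  have key : tangentTerm w y s i - tangentTerm w y t i =
      (s - t) * (2 * (y i / w i) - (s + t)) * w i := by
    rw [tangentTerm, tangentTerm]
    field_simp
    ring
  rw [← sub_nonneg, key, mul_nonneg_iff_of_pos_right hw]

lemma isLowerSet_tangentTerm_le {m : ℕ} (hw : ∀ i, 0 < w i) (e : Fin m ≃ ι)
    (hsorted : Monotone fun i => y (e i) / w (e i)) {s t : ℝ} (hst : s ≤ t) :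
    IsLowerSet {i | tangentTerm w y t (e i) ≤ tangentTerm w y s (e i)} := by
  intro j i hij hj
  simp only [Set.mem_ofPred_eq, tangentTerm_le_tangentTerm_iff (hw _)] at hj ⊢
  nlinarith [mul_nonneg (sub_nonneg.2 hst) (sub_nonneg.2 (hsorted hij))]

end TangentTerm

section GiniScore

variable {ι : Type*} [Fintype ι] [DecidableEq ι] (w y : ι → ℝ)

noncomputable def giniScore (S : Finset ι) : ℝ :=
  (∑ i ∈ S, y i) ^ 2 / ∑ i ∈ S, w i + (∑ i ∈ Sᶜ, y i) ^ 2 / ∑ i ∈ Sᶜ, w i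

lemma giniScore_compl (S : Finset ι) : giniScore w y Sᶜ = giniScore w y S := by
  rw [giniScore, giniScore, compl_compl, add_comm]

variable {w y}

lemma giniScore_le_giniScore_filter (hy : ∀ i, 0 ≤ y i) (hyw : ∀ i, y i ≤ w i)
    (S : Finset ι) :
    giniScore w y S ≤ giniScore w y (univ.filter fun i =>
      tangentTerm w y (proportion w y Sᶜ) i ≤ tangentTerm w y (proportion w y S) i) := by
  set T := univ.filter fun i =>
    tangentTerm w y (proportion w y Sᶜ) i ≤ tangentTerm w y (proportion w y S) i
  calc giniScore w y S
      = ∑ i ∈ S, tangentTerm w y (proportion w y S) i +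
          ∑ i ∈ Sᶜ, tangentTerm w y (proportion w y Sᶜ) i := by
        rw [giniScore, sum_tangentTerm_proportion hy hyw, sum_tangentTerm_proportion hy hyw]
    _ ≤ ∑ i ∈ T, tangentTerm w y (proportion w y S) i +
          ∑ i ∈ Tᶜ, tangentTerm w y (proportion w y Sᶜ) i :=
        sum_add_sum_compl_le_sum_filter_add_sum_compl _ _ S
    _ ≤ giniScore w y T :=
        add_le_add (sum_tangentTerm_le hy hyw _ T) (sum_tangentTerm_le hy hyw _ Tᶜ)

end GiniScore

section SortedPrefix

variable {ι : Type*} [DecidableEq ι] {m : ℕ}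

def sortedPrefix (e : Fin m ≃ ι) (k : ℕ) : Finset ι :=
  (univ.filter fun i : Fin m => (i : ℕ) < k).image fun i => e i

lemma mem_sortedPrefix {e : Fin m ≃ ι} {k : ℕ} {c : ι} :
    c ∈ sortedPrefix e k ↔ ((e.symm c : Fin m) : ℕ) < k := by
  simp only [sortedPrefix, mem_image, mem_filter, mem_univ, true_and]
  exact ⟨by rintro ⟨i, hi, rfl⟩; simpa using hi, fun h => ⟨_, h, e.apply_symm_apply c⟩⟩

lemma exists_filter_eq_sortedPrefix [Fintype ι] (e : Fin m ≃ ι) (P : ι → Prop) [DecidablePred P]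
    (hP : IsLowerSet {i | P (e i)}) : ∃ k, univ.filter P = sortedPrefix e k := by
  have hmem : ∀ c, P c ↔ e.symm c ∈ {i | P (e i)} := by simp
  rcases hP.eq_univ_or_Iio with h | ⟨a, h⟩
  · exact ⟨m, ext fun c => by simp [mem_sortedPrefix, hmem c, h]⟩
  · exact ⟨a, ext fun c => by simp [mem_sortedPrefix, hmem c, h]⟩

end SortedPrefix

lemma exists_giniScore_le_sortedPrefix {ι : Type*} [Fintype ι] [DecidableEq ι] {w y : ι → ℝ}
    (hw : ∀ i, 0 < w i) (hy : ∀ i, 0 ≤ y i) (hyw : ∀ i, y i ≤ w i) {m : ℕ} (e : Fin m ≃ ι)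
    (hsorted : Monotone fun i => y (e i) / w (e i)) (S : Finset ι) :
    ∃ k, giniScore w y S ≤ giniScore w y (sortedPrefix e k) := by
  wlog h : proportion w y S ≤ proportion w y Sᶜ generalizing S
  · obtain ⟨k, hk⟩ := this Sᶜ (by rw [compl_compl]; exact (not_le.1 h).le)
    exact ⟨k, giniScore_compl w y S ▸ hk⟩
  obtain ⟨k, hk⟩ :=
    exists_filter_eq_sortedPrefix e (fun c => tangentTerm w y _ c ≤ tangentTerm w y _ c)
      (isLowerSet_tangentTerm_le hw e hsorted h)
  exact ⟨k, hk ▸ giniScore_le_giniScore_filter hy hyw S⟩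

lemma giniImpurity_eq_giniScore {C : Type*} [Fintype C] [DecidableEq C] (n0 n1 : C → ℕ)
    (L : Finset C) :
    giniImpurity n0 n1 L = 2 / (∑ c, ((n0 c : ℝ) + n1 c)) *
      (∑ c, (n1 c : ℝ) - giniScore (fun c => (n0 c : ℝ) + n1 c) (fun c => (n1 c : ℝ)) L) := by
  have hzero := sum_eq_zero_of_sum_eq_zero (w := fun c => (n0 c : ℝ) + n1 c)
    (y := fun c => (n1 c : ℝ)) (fun c => Nat.cast_nonneg _)
    (fun c => le_add_of_nonneg_left (Nat.cast_nonneg _))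
  rw [giniImpurity, giniScore, ← sum_add_sum_compl L fun c => (n1 c : ℝ),
    ← sum_add_sum_compl L fun c => (n0 c : ℝ) + n1 c,
    div_mul_one_sub_sq_sub_one_sub_sq _ (hzero L), div_mul_one_sub_sq_sub_one_sub_sq _ (hzero Lᶜ)]
  ring

/-- Coppersmith–Hodges–Hong–Monma: for binary classification over a set of categories,
some 2-partition minimizing the weighted Gini impurity is an initial segment of the
order sorting categories by their proportion of class-1 samples. -/
theorem sorted_prefix_partition_optimal {C : Type*} [Fintype C] [DecidableEq C]
    (n0 n1 : C → ℕ) (hpos : ∀ c, 0 < n0 c + n1 c)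
    (m : ℕ) (e : Fin m ≃ C)
    (hsorted : Monotone fun i : Fin m =>
      (n1 (e i) : ℝ) / ((n0 (e i) : ℝ) + n1 (e i))) :
    ∃ k : ℕ, ∀ L : Finset C,
      giniImpurity n0 n1
          ((Finset.univ.filter fun i : Fin m => (i : ℕ) < k).image fun i => e i)
        ≤ giniImpurity n0 n1 L := by
  set w : C → ℝ := fun c => (n0 c : ℝ) + n1 c
  set y : C → ℝ := fun c => (n1 c : ℝ)
  have hw : ∀ c, 0 < w c := fun c => show (0 : ℝ) < n0 c + n1 c by exact_mod_cast hpos c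
  have hy : ∀ c, 0 ≤ y c := fun c => Nat.cast_nonneg _
  have hyw : ∀ c, y c ≤ w c := fun c => le_add_of_nonneg_left (Nat.cast_nonneg _)
  obtain ⟨S₀, hS₀⟩ := Finite.exists_max (giniScore w y)
  obtain ⟨k, hk⟩ := exists_giniScore_le_sortedPrefix hw hy hyw e hsorted S₀
  refine ⟨k, fun L => ?_⟩
  rw [giniImpurity_eq_giniScore, giniImpurity_eq_giniScore]
  exact mul_le_mul_of_nonneg_left (sub_le_sub_left ((hS₀ L).trans hk) _) (by positivity)
end
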